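/- Let l(x,y,z) = 2x − 5y + 11z and F(x,y,z) = x³ + y³ + z³ − 6xyz + l(x,y,z)². Then the origin is a critical point of F with critical value 0, and every real critical point a ∈ ℝ³ of F with a ≠ (0,0,0) satisfies F(a) > 0. -/

import Mathlib

noncomputable section

/-- `F = x³ + y³ + z³ - 6xyz + l²` with `l = 2x - 5y + 11z`. -/
def F19 (v : ℝ × ℝ × ℝ) : ℝ :=
  v.1 ^ 3 + v.2.1 ^ 3 + v.2.2 ^ 3 - 6 * v.1 * v.2.1 * v.2.2 +
    (2 * v.1 - 5 * v.2.1 + 11 * v.2.2) ^ 2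

/-!
Write `F = C + l²` with `C` the cubic part. Euler's relation for the two homogeneous pieces gives
`⟨∇F(a), a⟩ = 3 C(a) + 2 l(a)²`, so at a critical point `3 F(a) = l(a)²`. It remains to exclude
critical points `a ≠ 0` on the plane `l = 0`: there `∇(l²)` vanishes, so `a` is a critical point
of `C`, and the cubic `x³ + y³ + z³ - 6xyz` has no critical point other than the origin.
-/

/-- The equations `x² = c yz`, `y² = c xz`, `z² = c xy` are the critical-point equations of the
Hesse cubic `x³ + y³ + z³ - 3c xyz`, which is nonsingular exactly when `c³ ≠ 1`. -/
theorem eq_zero_of_sq_eq_mul_of_cube_ne_one {R : Type*} [CommRing R] [IsDomain R]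
    {c x y z : R} (hc : c ^ 3 ≠ 1) (hx : x ^ 2 = c * y * z) (hy : y ^ 2 = c * x * z)
    (hz : z ^ 2 = c * x * y) : x = 0 ∧ y = 0 ∧ z = 0 := by
  have hxyz : x * y * z = 0 := by
    have h : (c ^ 3 - 1) * (x * y * z) ^ 2 = 0 := by
      linear_combination -(y ^ 2 * z ^ 2 * hx + c * y * z ^ 3 * hy + c ^ 2 * x * y * z ^ 2 * hz)
    exact pow_eq_zero_iff two_ne_zero |>.mp <| (mul_eq_zero.mp h).resolve_left (sub_ne_zero.mpr hc)
  have sq0 {t : R} (h : t ^ 2 = 0) : t = 0 := pow_eq_zero_iff two_ne_zero |>.mp h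
  rcases mul_eq_zero.mp hxyz with hxy | rfl
  · rcases mul_eq_zero.mp hxy with rfl | rfl
    · exact ⟨rfl, sq0 (by simpa using hy), sq0 (by simpa using hz)⟩
    · exact ⟨sq0 (by simpa using hx), rfl, sq0 (by simpa using hz)⟩
  · exact ⟨sq0 (by simpa using hx), sq0 (by simpa using hy), rfl⟩

namespace F19

def lin (v : ℝ × ℝ × ℝ) : ℝ := 2 * v.1 - 5 * v.2.1 + 11 * v.2.2

def partialX (a : ℝ × ℝ × ℝ) : ℝ := 3 * a.1 ^ 2 - 6 * a.2.1 * a.2.2 + 4 * lin a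
def partialY (a : ℝ × ℝ × ℝ) : ℝ := 3 * a.2.1 ^ 2 - 6 * a.1 * a.2.2 - 10 * lin a
def partialZ (a : ℝ × ℝ × ℝ) : ℝ := 3 * a.2.2 ^ 2 - 6 * a.1 * a.2.1 + 22 * lin a

def gradient (a : ℝ × ℝ × ℝ) : ℝ × ℝ × ℝ →L[ℝ] ℝ :=
  partialX a • ContinuousLinearMap.fst ℝ ℝ (ℝ × ℝ) +
  partialY a • (ContinuousLinearMap.fst ℝ ℝ ℝ).comp (ContinuousLinearMap.snd ℝ ℝ (ℝ × ℝ)) +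
  partialZ a • (ContinuousLinearMap.snd ℝ ℝ ℝ).comp (ContinuousLinearMap.snd ℝ ℝ (ℝ × ℝ))

theorem hasFDerivAt (a : ℝ × ℝ × ℝ) : HasFDerivAt F19 (gradient a) a := by
  have hx : HasFDerivAt (fun v : ℝ × ℝ × ℝ => v.1) (ContinuousLinearMap.fst ℝ ℝ (ℝ × ℝ)) a :=
    hasFDerivAt_fst
  have hy : HasFDerivAt (fun v : ℝ × ℝ × ℝ => v.2.1)
      ((ContinuousLinearMap.fst ℝ ℝ ℝ).comp (ContinuousLinearMap.snd ℝ ℝ (ℝ × ℝ))) a :=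
    hasFDerivAt_fst.comp a hasFDerivAt_snd
  have hz : HasFDerivAt (fun v : ℝ × ℝ × ℝ => v.2.2)
      ((ContinuousLinearMap.snd ℝ ℝ ℝ).comp (ContinuousLinearMap.snd ℝ ℝ (ℝ × ℝ))) a :=
    hasFDerivAt_snd.comp a hasFDerivAt_snd
  have hl := ((hx.const_mul (2 : ℝ)).sub (hy.const_mul 5)).add (hz.const_mul 11)
  refine ((((hx.pow 3).add (hy.pow 3)).add (hz.pow 3)).sub
    (((hx.const_mul 6).mul hy).mul hz)).add (hl.pow 2) |>.congr_fderiv ?_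
  ext <;> simp [gradient, partialX, partialY, partialZ, lin] <;> ring

theorem partials_eq_zero_of_fderiv_eq_zero {a : ℝ × ℝ × ℝ} (h : fderiv ℝ F19 a = 0) :
    partialX a = 0 ∧ partialY a = 0 ∧ partialZ a = 0 := by
  rw [(hasFDerivAt a).fderiv] at h
  refine ⟨?_, ?_, ?_⟩
  · simpa [gradient] using congrArg (fun L => L (1, 0, 0)) h
  · simpa [gradient] using congrArg (fun L => L (0, 1, 0)) h
  · simpa [gradient] using congrArg (fun L => L (0, 0, 1)) h

theorem three_mul_eq_lin_sq_of_fderiv_eq_zero {a : ℝ × ℝ × ℝ} (h : fderiv ℝ F19 a = 0) :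
    3 * F19 a = lin a ^ 2 := by
  obtain ⟨hx, hy, hz⟩ := partials_eq_zero_of_fderiv_eq_zero h
  simp only [partialX, partialY, partialZ, F19, lin] at hx hy hz ⊢
  linear_combination a.1 * hx + a.2.1 * hy + a.2.2 * hz

theorem eq_zero_of_fderiv_eq_zero_of_lin_eq_zero {a : ℝ × ℝ × ℝ} (h : fderiv ℝ F19 a = 0)
    (hl : lin a = 0) : a = 0 := by
  obtain ⟨hx, hy, hz⟩ := partials_eq_zero_of_fderiv_eq_zero h
  simp only [partialX, partialY, partialZ, hl] at hx hy hz
  obtain ⟨h1, h2, h3⟩ := eq_zero_of_sq_eq_mul_of_cube_ne_one (c := (2 : ℝ)) (x := a.1)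
    (y := a.2.1) (z := a.2.2) (by norm_num) (by linarith) (by linarith) (by linarith)
  exact Prod.ext h1 (Prod.ext h2 h3)

end F19

/-- The origin is a critical point of `F = x³ + y³ + z³ - 6xyz + (2x - 5y + 11z)²` with
critical value `0`, and every other real critical point of `F` has positive critical
value. -/
theorem F19_critical_values_positive_away_from_origin :
    fderiv ℝ F19 0 = 0 ∧ F19 0 = 0 ∧
      ∀ a : ℝ × ℝ × ℝ, a ≠ 0 → fderiv ℝ F19 a = 0 → 0 < F19 a := by
  refine ⟨?_, by norm_num [F19], fun a ha h => ?_⟩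
  · rw [(F19.hasFDerivAt 0).fderiv]
    ext <;> simp [F19.gradient, F19.partialX, F19.partialY, F19.partialZ, F19.lin]
  · have hl : F19.lin a ≠ 0 := fun hl => ha (F19.eq_zero_of_fderiv_eq_zero_of_lin_eq_zero h hl)
    have := F19.three_mul_eq_lin_sq_of_fderiv_eq_zero h
    have : 0 < F19.lin a ^ 2 := by positivity
    linarith
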